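/- Let X be a cosmic Tychonoff (completely regular Hausdorff) space. Then C_p(X) is an Ascoli space if and only if C_p(X) is κ-Fréchet–Urysohn. -/

import Mathlib

/-!
κ-Fréchet–Urysohn implies Ascoli in every space: a compact `K ⊆ C_k(Z)` is equicontinuous along
each convergent sequence `uₙ → x` (a tube-lemma argument on the compact set `{x, u₀, u₁, …}`).
If even continuity failed at `x`, the points `y` at which some `g ∈ K` close to `f x` at `x` is far
from `f x` would form an open set accumulating at `x`, and a sequence from it converging to `x`
would contradict that equicontinuity.

Conversely, if `C_p(X)` is Ascoli then `X` has Sakai's property (κ). For disjoint finite sets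
`Dₙ`, the functions `f ↦ ∏_{x ∈ Dₙ} max 0 (f x - n)` together with `0` are not evenly continuous
at `0`, so they do not tend to `0` in `C_k(C_p(X))`; a compact `Q ⊆ C_p(X)` on which they do not
eventually vanish yields `fₙ ∈ Q` with `fₙ > n` on `Dₙ`, and the sets `{fₙ > n}` are point-finite
because `Q` is pointwise bounded. Property (κ) in turn gives κ-Fréchet–Urysohn: for `z ∈ cl A`
choose recursively `gₙ ∈ A` within `1/(n+1)` of `z` on `E₀ ∪ ⋯ ∪ Eₙ₋₁`, where `Eₙ` is a finite
set such that agreeing with `gₙ` on `Eₙ` forces membership in `A`. The new points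
`Dₙ = Eₙ \ (E₀ ∪ ⋯ ∪ Eₙ₋₁)` are disjoint; gluing `gₙ` on a point-finite open expansion of a
subsequence of the `Dₙ` with a `1/(n+1)`-truncation of `gₙ - z` elsewhere gives functions in `A`
converging pointwise to `z`.
-/

/-- `C_p(X)`: the continuous real-valued functions on `X`, considered with the topology
of pointwise convergence (as a subspace of the product `ℝ^X`). -/
def Cp (X : Type*) [TopologicalSpace X] : Type _ := C(X, ℝ)

/-- The topology of pointwise convergence on `Cp X`. -/
instance Cp.instTopologicalSpace (X : Type*) [TopologicalSpace X] :
    TopologicalSpace (Cp X) :=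
  TopologicalSpace.induced (fun f : C(X, ℝ) => (f : X → ℝ)) Pi.topologicalSpace

/-- A set `K` of continuous real-valued functions on `Z` is evenly continuous if for
every `x ∈ Z`, `f ∈ K` and open `V ∋ f x` there are an open `U ∋ x` and an open
`W ∋ f x` such that every `g ∈ K` with `g x ∈ W` maps `U` into `V`. -/
def EvenlyContinuousOn (Z : Type*) [TopologicalSpace Z] (K : Set C(Z, ℝ)) : Prop :=
  ∀ x : Z, ∀ f ∈ K, ∀ V : Set ℝ, IsOpen V → f x ∈ V →
    ∃ U : Set Z, IsOpen U ∧ x ∈ U ∧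
      ∃ W : Set ℝ, IsOpen W ∧ f x ∈ W ∧
        ∀ g ∈ K, g x ∈ W → ∀ y ∈ U, g y ∈ V

/-- A space `Z` is Ascoli if every compact subset of `C_k(Z)` (continuous real-valued
functions with the compact-open topology) is evenly continuous. -/
def AscoliSpace (Z : Type*) [TopologicalSpace Z] : Prop :=
  ∀ K : Set C(Z, ℝ), IsCompact K → EvenlyContinuousOn Z K

/-- A space `Z` is κ-Fréchet–Urysohn if for every open `A ⊆ Z` and every `z` in the
closure of `A` there is a sequence in `A` converging to `z`. -/
def KappaFrechetUrysohn (Z : Type*) [TopologicalSpace Z] : Prop :=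
  ∀ A : Set Z, IsOpen A → ∀ z ∈ closure A,
    ∃ u : ℕ → Z, (∀ n, u n ∈ A) ∧ Filter.Tendsto u Filter.atTop (nhds z)

/-- A space is cosmic if it has a countable network. -/
def Cosmic (X : Type*) [TopologicalSpace X] : Prop :=
  ∃ N : Set (Set X), N.Countable ∧
    ∀ x : X, ∀ U : Set X, IsOpen U → x ∈ U → ∃ n ∈ N, x ∈ n ∧ n ⊆ U


open Filter Topology Set Function

lemma exists_continuous_one_zero_of_finset {X : Type*} [TopologicalSpace X]
    [CompletelyRegularSpace X] (s : Finset X) {U : Set X} (hU : IsOpen U) (hsU : ↑s ⊆ U) :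
    ∃ f : C(X, ℝ), (∀ x ∈ s, f x = 1) ∧ ∀ x ∉ U, f x = 0 := by
  have hsep := fun a (ha : a ∈ s) =>
    CompletelyRegularSpace.completely_regular_isOpen a U hU (hsU ha)
  choose! g hg hga hgU using hsep
  refine ⟨⟨fun x => 1 - ∏ a ∈ s, (g a x : ℝ), continuous_const.sub <|
    continuous_finsetProd _ fun a ha => continuous_subtype_val.comp (hg a ha)⟩, ?_, ?_⟩
  · intro x hx
    simp [Finset.prod_eq_zero hx, hga x hx]
  · intro x hx
    rw [ContinuousMap.coe_mk, Finset.prod_eq_one fun a ha => ?_, sub_self]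
    simp [hgU a ha hx]

lemma exists_continuousMap_agree_or_near {X : Type*} [TopologicalSpace X] (z g α : C(X, ℝ))
    {r : ℝ} (hr : 0 ≤ r) :
    ∃ h : C(X, ℝ), (∀ x, α x = 1 ∨ dist (g x) (z x) ≤ r → h x = g x) ∧
      ∀ x, α x = 0 → dist (h x) (z x) ≤ r := by
  let clip : ℝ → ℝ := fun t => max (-r) (min r t)
  have hclip : Continuous clip := continuous_const.max (continuous_const.min continuous_id)
  refine ⟨⟨fun x => z x + clip (g x - z x) + α x * (g x - z x - clip (g x - z x)), by fun_prop⟩,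
    fun x hx => ?_, fun x hx => ?_⟩
  · rcases hx with hx | hx
    · simp [hx]
    · rw [Real.dist_eq, abs_le] at hx
      simp [clip, min_eq_right hx.2, max_eq_right hx.1]
  · simp only [ContinuousMap.coe_mk, hx, zero_mul, add_zero, Real.dist_eq, add_sub_cancel_left]
    exact abs_le.2 ⟨le_max_left _ _, max_le (neg_le_self hr) (min_le_left _ _)⟩

lemma Pairwise.eventually_cofinite_disjoint {ι α : Type*} {D : ι → Set α}
    (hD : Pairwise (Disjoint on D)) {E : Set α} (hE : E.Finite) :
    ∀ᶠ n in cofinite, Disjoint (D n) E := by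
  have hfin : {n | ¬Disjoint (D n) E}.Finite := by
    refine (hE.biUnion fun x _ => (?_ : {n | x ∈ D n}.Subsingleton).finite).subset ?_
    · exact fun m hm n hn => hD.eq (not_disjoint_iff.2 ⟨x, hm, hn⟩)
    · intro n hn
      obtain ⟨x, hxD, hxE⟩ := not_disjoint_iff.1 hn
      exact mem_biUnion hxE hxD
  simpa using hfin.eventually_cofinite_notMem

lemma IsCompact.eventually_forall_dist_apply_lt {Z α : Type*} [TopologicalSpace Z]
    [PseudoMetricSpace α] {K : Set C(Z, α)} (hK : IsCompact K) {u : ℕ → Z} {x : Z}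
    (hu : Tendsto u atTop (𝓝 x)) {ε : ℝ} (hε : 0 < ε) :
    ∀ᶠ n in atTop, ∀ g ∈ K, dist (g (u n)) (g x) < ε := by
  have hS : IsCompact (insert x (range u)) := hu.isCompact_insert_range
  suffices h : ∀ g ∈ K, ∀ᶠ p in atTop ×ˢ 𝓝 g, dist (p.2 (u p.1)) (p.2 x) < ε by
    have := prod_mono le_rfl principal_le_nhdsSet (hK.mem_prod_nhdsSet_of_forall h)
    exact eventually_prod_principal_iff.1 this
  intro g _
  have hnear : ∀ᶠ f in 𝓝 g, ∀ y ∈ insert x (range u), dist (g y) (f y) < ε / 3 :=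
    Metric.tendstoUniformlyOn_iff.1
      (ContinuousMap.tendsto_iff_forall_isCompact_tendstoUniformlyOn.1 tendsto_id _ hS) _
      (by positivity)
  have hclose : ∀ᶠ n in atTop, dist (g (u n)) (g x) < ε / 3 :=
    Metric.tendsto_nhds.1 ((g.continuous.tendsto x).comp hu) _ (by positivity)
  filter_upwards [hclose.prod_mk hnear] with ⟨n, f⟩ ⟨hn, hf⟩
  have h₁ := hf (u n) (mem_insert_of_mem _ (mem_range_self n))
  have h₂ := hf x (mem_insert x _)
  calc dist (f (u n)) (f x)
      ≤ dist (f (u n)) (g (u n)) + dist (g (u n)) (g x) + dist (g x) (f x) :=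
        dist_triangle4 _ _ _ _
    _ < ε := by rw [dist_comm] at h₁; linarith

/-- Sakai's property (κ). -/
def HasPropertyKappa (X : Type*) [TopologicalSpace X] : Prop :=
  ∀ D : ℕ → Finset X, Pairwise (Disjoint on D) →
    ∃ φ : ℕ → ℕ, StrictMono φ ∧ ∃ U : ℕ → Set X, (∀ n, IsOpen (U n)) ∧
      (∀ n, ↑(D (φ n)) ⊆ U n) ∧ ∀ x, {n | x ∈ U n}.Finite

namespace Cp

variable {X : Type*} [TopologicalSpace X]

instance instFunLike : FunLike (Cp X) X ℝ := ContinuousMap.instFunLike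

def ofContinuousMap (f : C(X, ℝ)) : Cp X := f

@[simp]
lemma ofContinuousMap_apply (f : C(X, ℝ)) (x : X) : ofContinuousMap f x = f x := rfl

lemma isInducing_coeFn : IsInducing (fun f : Cp X => (f : X → ℝ)) :=
  IsInducing.induced _

lemma continuous_apply (x : X) : Continuous fun f : Cp X => f x :=
  (_root_.continuous_apply x).comp isInducing_coeFn.continuous

lemma tendsto_nhds_iff {ι : Type*} {l : Filter ι} {F : ι → Cp X} {f : Cp X} :
    Tendsto F l (𝓝 f) ↔ ∀ x, Tendsto (fun i => F i x) l (𝓝 (f x)) := by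
  rw [isInducing_coeFn.tendsto_nhds_iff, tendsto_pi_nhds]
  rfl

lemma exists_finset_of_mem_nhds {A : Set (Cp X)} {f : Cp X} (hA : A ∈ 𝓝 f) :
    ∃ E : Finset X, ∀ g : Cp X, (∀ x ∈ E, g x = f x) → g ∈ A := by
  rw [isInducing_coeFn.nhds_eq_comap, nhds_pi, mem_comap] at hA
  obtain ⟨B, hB, hBA⟩ := hA
  obtain ⟨I, hI, t, ht, hIt⟩ := mem_pi.1 hB
  refine ⟨hI.toFinset, fun g hg => hBA (hIt fun x hx => ?_)⟩
  change g x ∈ t x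
  rw [hg x (hI.mem_toFinset.2 hx)]
  exact mem_of_mem_nhds (ht x)

lemma exists_mem_dist_lt_of_mem_closure {A : Set (Cp X)} {f : Cp X} (hf : f ∈ closure A)
    (E : Finset X) {ε : ℝ} (hε : 0 < ε) : ∃ g ∈ A, ∀ x ∈ E, dist (g x) (f x) < ε := by
  have hnear : ∀ᶠ g in 𝓝 f, ∀ x ∈ E, dist (g x) (f x) < ε :=
    (eventually_all_finset E).2 fun x _ =>
      Metric.tendsto_nhds.1 ((Cp.continuous_apply x).tendsto f) ε hε
  obtain ⟨g, hgE, hgA⟩ := (mem_closure_iff_frequently.1 hf).and_eventually hnear |>.exists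
  exact ⟨g, hgE, hgA⟩

def excess (s : Finset X) (c : ℝ) : C(Cp X, ℝ) :=
  ⟨fun f => ∏ x ∈ s, max 0 (f x - c),
    continuous_finsetProd _ fun x _ => continuous_const.max
      ((Cp.continuous_apply x).sub continuous_const)⟩

lemma excess_ne_zero_iff {s : Finset X} {c : ℝ} {f : Cp X} :
    excess s c f ≠ 0 ↔ ∀ x ∈ s, c < f x := by
  simp [excess, Finset.prod_ne_zero_iff]

lemma excess_eq_one {s : Finset X} {c : ℝ} {f : Cp X} (hf : ∀ x ∈ s, f x = c + 1) :
    excess s c f = 1 :=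
  Finset.prod_eq_one fun x hx => by simp [hf x hx]

lemma not_evenlyContinuousOn_excess [T35Space X] {D : ℕ → Finset X}
    (hD : Pairwise (Disjoint on D)) (hne : ∃ᶠ n in atTop, (D n).Nonempty) :
    ¬EvenlyContinuousOn (Cp X) (insert 0 (range fun n => excess (D n) n)) := by
  intro hEC
  obtain ⟨U, hU, h0U, W, -, h0W, hUW⟩ :=
    hEC (ofContinuousMap 0) 0 (mem_insert _ _) (Iio 1) isOpen_Iio (by simp)
  obtain ⟨E, hE⟩ := exists_finset_of_mem_nhds (hU.mem_nhds h0U)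
  have hdisj : ∀ᶠ n in atTop, Disjoint (D n : Set X) E := by
    rw [← Nat.cofinite_eq_atTop]
    exact Pairwise.eventually_cofinite_disjoint (D := fun n => (D n : Set X))
      (fun m n hmn => Finset.disjoint_coe.2 (hD hmn)) E.finite_toSet
  obtain ⟨n, ⟨x₀, hx₀⟩, hnE⟩ := (hne.and_eventually hdisj).exists
  obtain ⟨χ, hχD, hχE⟩ := exists_continuous_one_zero_of_finset (D n)
    E.finite_toSet.isClosed.isOpen_compl hnE.subset_compl_right
  -- `y` agrees with `0` on `E`, hence lies in `U`, yet `excess (D n) n y = 1`.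
  let y : Cp X := ofContinuousMap (((n : ℝ) + 1) • χ)
  have hyU : y ∈ U := hE y fun x hx => by simp [y, hχE x (not_not.2 hx)]
  have hexcess0 : excess (D n) n (ofContinuousMap 0) ∈ W := by
    have : excess (D n) n (ofContinuousMap 0) = 0 := by
      by_contra h
      have hlt := excess_ne_zero_iff.1 h x₀ hx₀
      simp only [ofContinuousMap_apply, ContinuousMap.zero_apply] at hlt
      exact (Nat.cast_nonneg n).not_gt hlt
    simpa [this] using h0W
  have := hUW _ (mem_insert_of_mem _ ⟨n, rfl⟩) hexcess0 y hyU
  rw [excess_eq_one fun x hx => by simp [y, hχD x hx]] at this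
  exact lt_irrefl _ (mem_Iio.1 this)

lemma exists_disjoint_scheme_of_mem_closure {A : Set (Cp X)} (hA : IsOpen A) {z : Cp X}
    (hz : z ∈ closure A) :
    ∃ (g : ℕ → Cp X) (E D : ℕ → Finset X), Pairwise (Disjoint on D) ∧
      (∀ n (h : Cp X), (∀ x ∈ E n, h x = g n x) → h ∈ A) ∧
      ∀ n, ∀ x ∈ E n, x ∈ D n ∨ dist (g n x) (z x) < 1 / (n + 1) := by
  classical
  have hstep : ∀ (P : Finset X) (n : ℕ), ∃ g : Cp X, ∃ E : Finset X,
      (∀ x ∈ P, dist (g x) (z x) < 1 / (n + 1)) ∧ ∀ h : Cp X, (∀ x ∈ E, h x = g x) → h ∈ A := by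
    intro P n
    obtain ⟨g, hgA, hgP⟩ := exists_mem_dist_lt_of_mem_closure hz P Nat.one_div_pos_of_nat
    exact ⟨g, (exists_finset_of_mem_nhds (hA.mem_nhds hgA)).imp fun E hE => ⟨hgP, hE⟩⟩
  choose G E hGP hEA using hstep
  -- `P n = E₀ ∪ ⋯ ∪ Eₙ₋₁`, where `Eₘ = E (P m) m`.
  let P : ℕ → Finset X := fun n => Nat.rec ∅ (fun k Pk => Pk ∪ E Pk k) n
  have hP : Monotone P := monotone_nat_of_le_succ fun n => Finset.subset_union_left
  refine ⟨fun n => G (P n) n, fun n => E (P n) n, fun n => P (n + 1) \ P n, ?_,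
    fun n => hEA _ _, ?_⟩
  · refine (pairwise_disjoint_on _).2 fun m n hmn => Finset.disjoint_left.2 fun x hxm hxn => ?_
    exact (Finset.mem_sdiff.1 hxn).2 (hP hmn (Finset.mem_sdiff.1 hxm).1)
  · intro n x hx
    rcases em (x ∈ P n) with hxP | hxP
    · exact Or.inr (hGP (P n) n x hxP)
    · exact Or.inl (Finset.mem_sdiff.2 ⟨Finset.mem_union_right _ hx, hxP⟩)

end Cp

section PropertyKappa

variable {X : Type*} [TopologicalSpace X]

lemma AscoliSpace.exists_isCompact_frequently_excess_ne_zero [T35Space X]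
    (h : AscoliSpace (Cp X)) {D : ℕ → Finset X} (hD : Pairwise (Disjoint on D))
    (hne : ∃ᶠ n in atTop, (D n).Nonempty) :
    ∃ Q : Set (Cp X), IsCompact Q ∧ ∃ᶠ n in atTop, ∃ f ∈ Q, Cp.excess (D n) n f ≠ 0 := by
  by_contra! hQ
  refine Cp.not_evenlyContinuousOn_excess hD hne (h _ (Tendsto.isCompact_insert_range ?_))
  refine ContinuousMap.tendsto_iff_forall_isCompact_tendstoUniformlyOn.2 fun Q hQc =>
    Metric.tendstoUniformlyOn_iff.2 fun ε hε => ?_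
  filter_upwards [hQ Q hQc] with n hn f hf
  simpa [hn f hf] using hε

theorem AscoliSpace.hasPropertyKappa_of_Cp [T35Space X] (h : AscoliSpace (Cp X)) :
    HasPropertyKappa X := by
  intro D hD
  by_cases hne : ∃ᶠ n in atTop, (D n).Nonempty
  · obtain ⟨Q, hQ, hfreq⟩ := h.exists_isCompact_frequently_excess_ne_zero hD hne
    obtain ⟨φ, hφ, hφQ⟩ := extraction_of_frequently_atTop hfreq
    choose f hfQ hf using hφQ
    refine ⟨φ, hφ, fun k => {x | (φ k : ℝ) < f k x},
      fun k => isOpen_lt continuous_const (ContinuousMap.continuous (f k)),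
      fun k x hx => Cp.excess_ne_zero_iff.1 (hf k) x hx, fun x => ?_⟩
    obtain ⟨B, hB⟩ := (hQ.image (Cp.continuous_apply x)).bddAbove
    refine (Set.finite_lt_nat ⌈B⌉₊).subset fun k (hk : (φ k : ℝ) < f k x) => ?_
    have hkB : (k : ℝ) < B := calc
      (k : ℝ) ≤ φ k := Nat.cast_le.2 (hφ.id_le k)
      _ < f k x := hk
      _ ≤ B := hB (mem_image_of_mem _ (hfQ k))
    exact Nat.lt_ceil.2 hkB
  · obtain ⟨φ, hφ, hφD⟩ := extraction_of_eventually_atTop (not_frequently.1 hne)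
    refine ⟨φ, hφ, fun _ => ∅, fun _ => isOpen_empty, fun k => ?_, fun x => by simp⟩
    simp [Finset.not_nonempty_iff_eq_empty.1 (hφD k)]

theorem HasPropertyKappa.kappaFrechetUrysohn_Cp [CompletelyRegularSpace X]
    (hX : HasPropertyKappa X) : KappaFrechetUrysohn (Cp X) := by
  intro A hA z hz
  obtain ⟨g, E, D, hD, hEA, hED⟩ := Cp.exists_disjoint_scheme_of_mem_closure hA hz
  obtain ⟨φ, hφ, U, hU, hDU, hUfin⟩ := hX D hD
  choose α hα1 hα0 using fun k => exists_continuous_one_zero_of_finset _ (hU k) (hDU k)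
  choose h hhg hhz using fun k =>
    exists_continuousMap_agree_or_near z (g (φ k)) (α k) (r := 1 / (φ k + 1)) (by positivity)
  refine ⟨fun k => Cp.ofContinuousMap (h k), fun k => hEA _ _ fun x hx => hhg k x ?_, ?_⟩
  · rcases hED _ x hx with hxD | hxz
    exacts [Or.inl (hα1 k x hxD), Or.inr hxz.le]
  rw [Cp.tendsto_nhds_iff]
  intro x
  have hout : ∀ᶠ k in atTop, x ∉ U k :=
    Nat.cofinite_eq_atTop ▸ (hUfin x).eventually_cofinite_notMem
  have hr : Tendsto (fun k => 1 / ((φ k : ℝ) + 1)) atTop (𝓝 0) :=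
    tendsto_one_div_add_atTop_nhds_zero_nat.comp hφ.tendsto_atTop
  refine tendsto_iff_dist_tendsto_zero.2 (squeeze_zero' (.of_forall fun _ => dist_nonneg) ?_ hr)
  filter_upwards [hout] with k hk using hhz k x (hα0 k x hk)

end PropertyKappa

theorem KappaFrechetUrysohn.ascoliSpace {Z : Type*} [TopologicalSpace Z]
    (hZ : KappaFrechetUrysohn Z) : AscoliSpace Z := by
  rintro K hK x f - V hV hfx
  obtain ⟨ε, hε, hball⟩ := Metric.isOpen_iff.1 hV _ hfx
  let A : Set Z := {y | ∃ g ∈ K, dist (g x) (f x) < ε / 3 ∧ 2 * ε / 3 < dist (g y) (f x)}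
  have hA : IsOpen A := isOpen_iff_mem_nhds.2 fun y ⟨g, hgK, hgx, hgy⟩ =>
    mem_of_superset ((isOpen_lt continuous_const (g.continuous.dist continuous_const)).mem_nhds
      hgy) fun y' hy' => ⟨g, hgK, hgx, hy'⟩
  have hxA : x ∉ closure A := by
    intro hxA
    obtain ⟨u, huA, hu⟩ := hZ A hA x hxA
    choose g hgK hgx hgu using huA
    obtain ⟨n, hn⟩ := (hK.eventually_forall_dist_apply_lt hu (by positivity : 0 < ε / 3)).exists
    linarith [hn (g n) (hgK n), dist_triangle (g n (u n)) (g n x) (f x), hgx n, hgu n]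
  refine ⟨(closure A)ᶜ, isClosed_closure.isOpen_compl, hxA, Metric.ball (f x) (ε / 3),
    Metric.isOpen_ball, Metric.mem_ball_self (by positivity), fun g hgK hgx y hy => hball ?_⟩
  have hgy : dist (g y) (f x) ≤ 2 * ε / 3 :=
    not_lt.1 fun h => hy (subset_closure ⟨g, hgK, hgx, h⟩)
  exact Metric.mem_ball.2 (by linarith)

theorem ascoli_Cp_iff_kappaFrechetUrysohn_of_cosmic_general (X : Type*) [TopologicalSpace X]
    [T35Space X] :
    AscoliSpace (Cp X) ↔ KappaFrechetUrysohn (Cp X) :=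
  ⟨fun h => h.hasPropertyKappa_of_Cp.kappaFrechetUrysohn_Cp, KappaFrechetUrysohn.ascoliSpace⟩

/-- For a cosmic Tychonoff space `X`, `C_p(X)` is Ascoli iff it is κ-Fréchet–Urysohn. -/
theorem ascoli_Cp_iff_kappaFrechetUrysohn_of_cosmic (X : Type*) [TopologicalSpace X]
    [T35Space X] (hX : Cosmic X) :
    AscoliSpace (Cp X) ↔ KappaFrechetUrysohn (Cp X) :=
  ascoli_Cp_iff_kappaFrechetUrysohn_of_cosmic_general X
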